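/- arXiv:1203.6294 — 4 statements merged into one kernel-verified Lean document; each statement's English description precedes it below -/
import Mathlib

section
/- Let G be a finite group acting linearly on a finite-dimensional vector space V over a field K. Then the algebra of G-invariant polynomial functions K[V]^G is a finitely generated K-algebra. -/
/-!
Every `P` is a root of the monic polynomial `∏_g (X - g • P)`, whose coefficients are invariant,
so `K[V]` is integral over `K[V]^G`; being also of finite type, it is a finite `K[V]^G`-module.
Since `K[V]` is of finite type over the noetherian ring `K`, the Artin–Tate lemma shows that
`K[V]^G` is of finite type over `K`.
-/

open MvPolynomial

theorem FixedPoints.subalgebra_fg (A B G : Type*) [CommRing A] [IsNoetherianRing A] [CommRing B]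
    [Algebra A B] [Algebra.FiniteType A B] [Group G] [Finite G] [MulSemiringAction G B]
    [SMulCommClass G A B] :
    (FixedPoints.subalgebra A B G).FG := by
  set S := FixedPoints.subalgebra A B G
  have : Algebra.IsInvariant S B G := ⟨fun b hb => ⟨⟨b, hb⟩, rfl⟩⟩
  have := Algebra.IsInvariant.isIntegral S B G
  have : Algebra.FiniteType S B := .of_restrictScalars_finiteType A S B
  have : Module.Finite S B := Algebra.IsIntegral.finite
  exact S.fg_top.mp <| fg_of_fg_of_fg A S B Algebra.FiniteType.out
    (Module.finite_def.mp ‹_›) Subtype.val_injective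

namespace MvPolynomial

variable {σ R : Type*} [Fintype σ] [CommSemiring R]

noncomputable def linearSubst (M : Matrix σ σ R) : MvPolynomial σ R →ₐ[R] MvPolynomial σ R :=
  aeval fun j => ∑ k, C (M j k) * X k

theorem linearSubst_comp (M N : Matrix σ σ R) :
    (linearSubst M).comp (linearSubst N) = linearSubst (N * M) := by
  refine algHom_ext fun j => ?_
  simp only [linearSubst, AlgHom.comp_apply, aeval_X, map_sum, map_mul, aeval_C, algebraMap_eq,
    Matrix.mul_apply, Finset.mul_sum, Finset.sum_mul, mul_assoc]
  exact Finset.sum_comm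

variable [DecidableEq σ]

theorem linearSubst_one : linearSubst (1 : Matrix σ σ R) = AlgHom.id R _ :=
  algHom_ext fun j => by simp [linearSubst, Matrix.one_apply]

/-- Substitution is contravariant in the matrix, so `M` acts through `M⁻¹`. -/
noncomputable def linearSubstEquiv :
    Matrix.GeneralLinearGroup σ R →* (MvPolynomial σ R ≃ₐ[R] MvPolynomial σ R) where
  toFun M := AlgEquiv.ofAlgHom (linearSubst ↑M⁻¹) (linearSubst ↑M)
    (by rw [linearSubst_comp, M.mul_inv, linearSubst_one])
    (by rw [linearSubst_comp, M.inv_mul, linearSubst_one])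
  map_one' := AlgEquiv.ext fun P => by simp [linearSubst_one]
  map_mul' M N := AlgEquiv.ext fun P => by simp [mul_inv_rev, ← linearSubst_comp]

theorem linearSubstEquiv_inv_apply (M : Matrix.GeneralLinearGroup σ R) (P : MvPolynomial σ R) :
    linearSubstEquiv M⁻¹ P = linearSubst ↑M P := by
  simp [linearSubstEquiv]

end MvPolynomial

/-- Hilbert–Noether finiteness theorem: for a finite group G acting linearly on the
finite-dimensional vector space V = K^d (via ρ : G → GL(d,K)), the algebra of
G-invariant polynomial functions K[V]^G is a finitely generated K-algebra.
The action of g on a polynomial P substitutes the linear forms given by ρ(g). -/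
theorem stmt_11 {K : Type*} [Field K] {d : ℕ} {G : Type*} [Group G] [Finite G]
    (ρ : G →* Matrix.GeneralLinearGroup (Fin d) K) :
    ∃ s : Finset (MvPolynomial (Fin d) K),
      (∀ Q ∈ s, ∀ g : G,
        aeval (fun j : Fin d =>
          ∑ k : Fin d, C ((ρ g : Matrix (Fin d) (Fin d) K) j k) * X k) Q = Q) ∧
      (∀ P : MvPolynomial (Fin d) K,
        (∀ g : G,
          aeval (fun j : Fin d =>
            ∑ k : Fin d, C ((ρ g : Matrix (Fin d) (Fin d) K) j k) * X k) P = P)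
        → P ∈ Algebra.adjoin K (s : Set (MvPolynomial (Fin d) K))) := by
  let act := linearSubstEquiv.comp ρ
  let _ : MulSemiringAction G (MvPolynomial (Fin d) K) := .compHom _ act
  have _ : SMulCommClass G K (MvPolynomial (Fin d) K) := ⟨fun g => map_smul (act g)⟩
  have mem_fixedPoints_iff (P : MvPolynomial (Fin d) K) :
      P ∈ FixedPoints.subalgebra K (MvPolynomial (Fin d) K) G ↔
        ∀ g : G, linearSubst (ρ g : Matrix (Fin d) (Fin d) K) P = P := by
    refine inv_surjective.forall.trans (forall_congr' fun g => ?_)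
    rw [← linearSubstEquiv_inv_apply, ← map_inv]
    rfl
  obtain ⟨s, hs⟩ := FixedPoints.subalgebra_fg K (MvPolynomial (Fin d) K) G
  refine ⟨s, fun Q hQ => (mem_fixedPoints_iff Q).mp ?_, fun P hP => ?_⟩
  · exact hs ▸ Algebra.subset_adjoin hQ
  · exact hs ▸ (mem_fixedPoints_iff P).mpr hP
end

section
/- In the setting of the constructive Weil descent proof: given an algebraic variety X ⊆ Cⁿ defined by polynomials P₁,...,Pᵣ ∈ L[x₁,...,xₙ] with a Galois descent datum {f_σ}_{σ∈Γ}, and elements a₁,...,a_{m-1} ∈ L with σⱼ(a_{j-1}) ≠ a_{j-1} for each non-identity σⱼ ∈ Γ, the variety X̂ ⊆ C^{n+m-1} defined by P₁ = ... = Pᵣ = 0, x_{n+1} = a₁, ..., x_{n+m-1} = a_{m-1} satisfies X̂^{σᵢ} ∩ X̂^{σⱼ} = ∅ for all i ≠ j, and the map Q(x) = (x, a₁,...,a_{m-1}) is a biregular isomorphism X → X̂. -/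
open MvPolynomial

/-- Lemma `supuesto`: given X ⊆ Cⁿ defined by P₁,…,Pᵣ ∈ L[x₁,…,xₙ] and elements
a_τ ∈ L (for τ ∈ Gal(L/K)) with τ(a_τ) ≠ a_τ for each τ ≠ id, the variety
X̂ ⊆ Cⁿ × C^Γ defined by the equations Pᵢ = 0 together with xₜ = a_τ satisfies
X̂^{σ₁} ∩ X̂^{σ₂} = ∅ for σ₁ ≠ σ₂, and Q(x) = (x, (a_τ)_τ) is a biregular
(bijective, with polynomial inverse the projection) isomorphism X → X̂. -/
theorem stmt_14 {K L C : Type*} [Field K] [Field L] [Field C]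
    [Algebra K L] [Algebra L C] [Algebra K C] [IsScalarTower K L C]
    [FiniteDimensional K L] [IsGalois K L] [IsAlgClosed C]
    {n r : ℕ} (P : Fin r → MvPolynomial (Fin n) L)
    (a : (L ≃ₐ[K] L) → L)
    (ha : ∀ τ : L ≃ₐ[K] L, τ ≠ 1 → τ (a τ) ≠ a τ)
    (X : Set (Fin n → C))
    (hX : X = {x | ∀ i, eval x (MvPolynomial.map (algebraMap L C) (P i)) = 0})
    (Xhat : (L ≃ₐ[K] L) → Set ((Fin n → C) × ((L ≃ₐ[K] L) → C)))
    (hXhat : Xhat = fun σ =>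
      {p | (∀ i, eval p.1 (MvPolynomial.map (algebraMap L C)
              (MvPolynomial.map (σ.toAlgHom.toRingHom) (P i))) = 0) ∧
           ∀ τ, p.2 τ = algebraMap L C (σ (a τ))}) :
    (∀ σ₁ σ₂ : L ≃ₐ[K] L, σ₁ ≠ σ₂ → Xhat σ₁ ∩ Xhat σ₂ = ∅) ∧
    Set.BijOn (fun x => (x, fun τ => algebraMap L C (a τ))) X (Xhat 1) := by
  have hinj : Function.Injective (algebraMap L C) := (algebraMap L C).injective
  have hid : ((1 : L ≃ₐ[K] L).toAlgHom.toRingHom) = RingHom.id L :=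
    RingHom.ext fun x => rfl
  subst hX hXhat
  constructor
  · intro σ₁ σ₂ hne
    ext p
    simp only [Set.mem_inter_iff, Set.mem_setOf_eq, Set.mem_empty_iff_false, iff_false]
    rintro ⟨⟨_, h1⟩, ⟨_, h2⟩⟩
    set τ := σ₂⁻¹ * σ₁ with hτ
    have hτne : τ ≠ 1 := by
      intro h
      rw [hτ, inv_mul_eq_one] at h
      exact hne h.symm
    have heq : σ₁ (a τ) = σ₂ (a τ) := hinj (by rw [← h1 τ, ← h2 τ])
    apply ha τ hτne
    calc τ (a τ) = σ₂⁻¹ (σ₁ (a τ)) := rfl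
    _ = σ₂⁻¹ (σ₂ (a τ)) := by rw [heq]
    _ = a τ := σ₂.symm_apply_apply _
  · constructor
    · intro x hx
      refine ⟨fun i => ?_, fun τ => by simp⟩
      rw [hid, MvPolynomial.map_id]
      exact hx i
    constructor
    · intro x _ y _ h
      exact congrArg Prod.fst h
    · rintro ⟨x, b⟩ ⟨h1, h2⟩
      refine ⟨x, fun i => ?_, ?_⟩
      · have := h1 i
        rwa [hid, MvPolynomial.map_id] at this
      · have : b = fun τ => algebraMap L C (a τ) := by
          funext τ; simpa using h2 τ
        simp [this]
end

section
/- For the complex affine curve X ⊂ C⁴ defined by 1 + x₁² + x₂² = 0, −1 + x₁² + x₃² = 0, i + x₁² + x₄² = 0, the map f(x₁,x₂,x₃,x₄) = (i x₁, i x₃, i x₂, i x₄) maps X bijectively onto the curve X^σ defined by 1 + x₁² + x₂² = 0, −1 + x₁² + x₃² = 0, −i + x₁² + x₄² = 0 (the complex-conjugated equations), and f^σ ∘ f = id_X where f^σ(x) = (−i x₁, −i x₃, −i x₂, −i x₄). In particular {id, f} is a Galois descent datum for X with respect to the extension Q(i)/Q. -/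
open Complex

/-- The Humbert curve example: for the affine curve X ⊂ ℂ⁴ defined by
1 + x₁² + x₂² = 0, −1 + x₁² + x₃² = 0, i + x₁² + x₄² = 0, the map
f(x) = (i x₁, i x₃, i x₂, i x₄) maps X bijectively onto the conjugated curve X^σ
(same equations with −i in place of i), and f^σ ∘ f = id on X, where
f^σ(x) = (−i x₁, −i x₃, −i x₂, −i x₄).  Thus {id, f} is a Galois descent datum
for X with respect to ℚ(i)/ℚ. -/
theorem stmt_16
    (X Xσ : Set (Fin 4 → ℂ)) (f fσ : (Fin 4 → ℂ) → (Fin 4 → ℂ))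
    (hX : X = {x | 1 + x 0 ^ 2 + x 1 ^ 2 = 0 ∧ -1 + x 0 ^ 2 + x 2 ^ 2 = 0 ∧
                   I + x 0 ^ 2 + x 3 ^ 2 = 0})
    (hXσ : Xσ = {x | 1 + x 0 ^ 2 + x 1 ^ 2 = 0 ∧ -1 + x 0 ^ 2 + x 2 ^ 2 = 0 ∧
                   -I + x 0 ^ 2 + x 3 ^ 2 = 0})
    (hf : f = fun x => ![I * x 0, I * x 2, I * x 1, I * x 3])
    (hfσ : fσ = fun x => ![-I * x 0, -I * x 2, -I * x 1, -I * x 3]) :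
    Set.BijOn f X Xσ ∧ ∀ x ∈ X, fσ (f x) = x := by
  have hinv : ∀ x : Fin 4 → ℂ, fσ (f x) = x := by
    intro x
    subst hf hfσ
    funext j
    fin_cases j <;> simp [← mul_assoc, I_mul_I]
  have hinv' : ∀ x : Fin 4 → ℂ, f (fσ x) = x := by
    intro x
    subst hf hfσ
    funext j
    fin_cases j <;> simp [← mul_assoc, I_mul_I]
  have hmaps : Set.MapsTo f X Xσ := by
    subst hX hXσ hf
    rintro x ⟨h1, h2, h3⟩
    refine ⟨?_, ?_, ?_⟩ <;>
      simp only [Set.mem_setOf_eq, Matrix.cons_val_zero, Matrix.cons_val_one,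
        Matrix.head_cons, Matrix.cons_val_two, Matrix.tail_cons, Matrix.cons_val_three]
    · linear_combination -h2 + (x 0 ^ 2 + x 2 ^ 2) * I_sq
    · linear_combination -h1 + (x 0 ^ 2 + x 1 ^ 2) * I_sq
    · linear_combination -h3 + (x 0 ^ 2 + x 3 ^ 2) * I_sq
  have hmaps' : Set.MapsTo fσ Xσ X := by
    subst hX hXσ hfσ
    rintro x ⟨h1, h2, h3⟩
    refine ⟨?_, ?_, ?_⟩ <;>
      simp only [Set.mem_setOf_eq, Matrix.cons_val_zero, Matrix.cons_val_one,
        Matrix.head_cons, Matrix.cons_val_two, Matrix.tail_cons, Matrix.cons_val_three]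
    · linear_combination -h2 + (x 0 ^ 2 + x 2 ^ 2) * I_sq
    · linear_combination -h1 + (x 0 ^ 2 + x 1 ^ 2) * I_sq
    · linear_combination -h3 + (x 0 ^ 2 + x 3 ^ 2) * I_sq
  refine ⟨Set.InvOn.bijOn ⟨fun x _ => hinv x, fun x _ => hinv' x⟩ hmaps hmaps', fun x _ => hinv x⟩
end

section
/- For the complex affine curves X ⊂ C⁴ defined by 1 + x₁² + x₂² = 0, −1 + x₁² + x₃² = 0, i + x₁² + x₄² = 0, and Ŷ ⊂ C⁴ defined by 4 + w₂² − w₃² = 0, w₁² + w₂w₃ = 0, w₁² + w₄² − 2 = 0, the map R̂(x₁,x₂,x₃,x₄) = ((1+i)x₁, x₂ + i x₃, x₃ + i x₂, (1+i)x₄) is a bijection (indeed a biregular isomorphism) from X onto Ŷ, with inverse (w₁,w₂,w₃,w₄) ↦ (w₁/(1+i), (w₂ − i w₃)/2, (w₃ − i w₂)/2, w₄/(1+i)). In particular Ŷ is defined over Q while X is isomorphic to it over Q(i). -/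
open Complex

/-- The explicit descent of the Humbert curve: the map
R̂(x) = ((1+i)x₁, x₂ + i x₃, x₃ + i x₂, (1+i)x₄) is a biregular bijection from
X : 1 + x₁² + x₂² = 0, −1 + x₁² + x₃² = 0, i + x₁² + x₄² = 0 onto
Ŷ : 4 + w₂² − w₃² = 0, w₁² + w₂w₃ = 0, w₁² + w₄² − 2 = 0 (a curve defined over ℚ),
with inverse w ↦ (w₁/(1+i), (w₂ − i w₃)/2, (w₃ − i w₂)/2, w₄/(1+i)). -/
theorem stmt_17
    (X Yhat : Set (Fin 4 → ℂ)) (Rhat Rinv : (Fin 4 → ℂ) → (Fin 4 → ℂ))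
    (hX : X = {x | 1 + x 0 ^ 2 + x 1 ^ 2 = 0 ∧ -1 + x 0 ^ 2 + x 2 ^ 2 = 0 ∧
                   I + x 0 ^ 2 + x 3 ^ 2 = 0})
    (hY : Yhat = {w | 4 + w 1 ^ 2 - w 2 ^ 2 = 0 ∧ w 0 ^ 2 + w 1 * w 2 = 0 ∧
                   w 0 ^ 2 + w 3 ^ 2 - 2 = 0})
    (hR : Rhat = fun x => ![(1 + I) * x 0, x 1 + I * x 2, x 2 + I * x 1,
                            (1 + I) * x 3])
    (hRinv : Rinv = fun w => ![w 0 / (1 + I), (w 1 - I * w 2) / 2,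
                               (w 2 - I * w 1) / 2, w 3 / (1 + I)]) :
    Set.BijOn Rhat X Yhat ∧ (∀ x, Rinv (Rhat x) = x) ∧ (∀ w, Rhat (Rinv w) = w) := by
  have hne : (1 : ℂ) + I ≠ 0 := by
    intro h
    have := congrArg Complex.im h
    simp at this
  subst hX hY hR hRinv
  have hleft : ∀ x : Fin 4 → ℂ,
      (fun w => ![w 0 / (1 + I), (w 1 - I * w 2) / 2, (w 2 - I * w 1) / 2,
        w 3 / (1 + I)]) ((fun x => ![(1 + I) * x 0, x 1 + I * x 2, x 2 + I * x 1,
        (1 + I) * x 3]) x) = x := by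
    intro x
    funext i
    fin_cases i <;> simp <;> field_simp <;>
      first
      | linear_combination (-(x 1) : ℂ) * Complex.I_sq
      | linear_combination (-(x 2) : ℂ) * Complex.I_sq
  have hright : ∀ w : Fin 4 → ℂ,
      (fun x => ![(1 + I) * x 0, x 1 + I * x 2, x 2 + I * x 1, (1 + I) * x 3])
        ((fun w => ![w 0 / (1 + I), (w 1 - I * w 2) / 2, (w 2 - I * w 1) / 2,
        w 3 / (1 + I)]) w) = w := by
    intro w
    funext i
    fin_cases i <;> simp <;> field_simp <;>
      first
      | linear_combination (-(w 1) : ℂ) * Complex.I_sq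
      | linear_combination (-(w 2) : ℂ) * Complex.I_sq
  have hmaps : ∀ x : Fin 4 → ℂ,
      x ∈ {x : Fin 4 → ℂ | 1 + x 0 ^ 2 + x 1 ^ 2 = 0 ∧ -1 + x 0 ^ 2 + x 2 ^ 2 = 0 ∧
        I + x 0 ^ 2 + x 3 ^ 2 = 0} →
      (fun x => ![(1 + I) * x 0, x 1 + I * x 2, x 2 + I * x 1, (1 + I) * x 3]) x ∈
      {w : Fin 4 → ℂ | 4 + w 1 ^ 2 - w 2 ^ 2 = 0 ∧ w 0 ^ 2 + w 1 * w 2 = 0 ∧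
        w 0 ^ 2 + w 3 ^ 2 - 2 = 0} := by
    rintro x ⟨h1, h2, h3⟩
    refine ⟨?_, ?_, ?_⟩ <;> simp
    · linear_combination 2 * h1 - 2 * h2 + (x 2 ^ 2 - x 1 ^ 2) * Complex.I_sq
    · linear_combination I * h1 + I * h2 + (x 0 ^ 2 + x 1 * x 2) * Complex.I_sq
    · linear_combination (2 * I) * h3 + (x 0 ^ 2 + x 3 ^ 2 - 2) * Complex.I_sq
  have hmem : ∀ w : Fin 4 → ℂ,
      w ∈ {w : Fin 4 → ℂ | 4 + w 1 ^ 2 - w 2 ^ 2 = 0 ∧ w 0 ^ 2 + w 1 * w 2 = 0 ∧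
        w 0 ^ 2 + w 3 ^ 2 - 2 = 0} →
      (fun w => ![w 0 / (1 + I), (w 1 - I * w 2) / 2, (w 2 - I * w 1) / 2,
        w 3 / (1 + I)]) w ∈
      {x : Fin 4 → ℂ | 1 + x 0 ^ 2 + x 1 ^ 2 = 0 ∧ -1 + x 0 ^ 2 + x 2 ^ 2 = 0 ∧
        I + x 0 ^ 2 + x 3 ^ 2 = 0} := by
    rintro w ⟨h1, h2, h3⟩
    refine ⟨?_, ?_, ?_⟩ <;> simp <;> field_simp
    · linear_combination (2 * I) * h1 + 4 * h2 +
        ((4 + (-2 * I - 4) * (w 1 * w 2) + w 1 ^ 2 + (I ^ 2 + 2 * I) * w 2 ^ 2 : ℂ)) *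
          Complex.I_sq
    · linear_combination (-2 * I) * h1 + 4 * h2 +
        ((-4 + (-2 * I - 4) * (w 1 * w 2) + w 2 ^ 2 + (I ^ 2 + 2 * I) * w 1 ^ 2 : ℂ)) *
          Complex.I_sq
    · linear_combination h3 + ((I + 2 : ℂ)) * Complex.I_sq
  refine ⟨⟨fun x hx => hmaps x hx, ?_, ?_⟩, hleft, hright⟩
  · intro a _ b _ h
    rw [← hleft a, ← hleft b, h]
  · intro w hw
    exact ⟨_, hmem w hw, hright w⟩
end
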